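/- arXiv:math/9909046 — 4 statements merged into one kernel-verified Lean document; each statement's English description precedes it below -/
import Mathlib

section
/- Let φ : B(H) → B(H) be multiplicative (φ(AB) = φ(A)φ(B)) and suppose that for every rank-one projection P, φ(P) is a rank-one projection, and for every A in B(H) and λ ∈ ℂ, φ(λA) is a limit in operator norm of operators λ U_n A U_n* with U_n unitary. Then for every rank-one projection P and every λ ∈ ℂ, φ(λP) = λφ(P). -/
/-!
Write `Q = φ(P)` and `T = φ(λP)`. Multiplicativity and `P² = P` give `T = QTQ`, and since `Q`
has rank one, `T = μQ` for some scalar `μ`. As a norm limit of `λ` times the idempotents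
`UₙPUₙ*`, `T` satisfies `T² = λT`, so `μ² = λμ`, i.e. `μ ∈ {0, λ}`. Unitary conjugation is
isometric, so `‖T‖ = ‖λP‖`, which rules out `μ = 0` unless `λ = 0`.
-/

open scoped ComplexOrder

noncomputable def rankOne {H : Type*} [NormedAddCommGroup H] [InnerProductSpace ℂ H]
    (x y : H) : H →L[ℂ] H :=
  (ContinuousLinearMap.toSpanSingleton ℂ x).comp (innerSL ℂ y)

def IsRankOneProj {H : Type*} [NormedAddCommGroup H] [InnerProductSpace ℂ H]
    [CompleteSpace H] (P : H →L[ℂ] H) : Prop :=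
  IsSelfAdjoint P ∧ P * P = P ∧ Module.rank ℂ (LinearMap.range (P : H →ₗ[ℂ] H)) = 1

open Filter Topology

theorem ContinuousLinearMap.ne_zero_of_rank_range_eq_one {K M : Type*} [Semiring K]
    [Nontrivial K] [TopologicalSpace M] [AddCommMonoid M] [Module K M] {f : M →L[K] M}
    (hr : Module.rank K (LinearMap.range (f : M →ₗ[K] M)) = 1) : f ≠ 0 := by
  rintro rfl
  simp at hr

theorem ContinuousLinearMap.exists_mul_mul_eq_smul_of_rank_range_eq_one {K M : Type*} [Field K]
    [TopologicalSpace M] [AddCommGroup M] [Module K M] [ContinuousConstSMul K M] {f : M →L[K] M}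
    (hr : Module.rank K (LinearMap.range (f : M →ₗ[K] M)) = 1) (g : M →L[K] M) :
    ∃ c : K, f * g * f = c • f := by
  obtain ⟨e, -, hspan⟩ := rank_eq_one_iff.mp hr
  have hcoord : ∀ x, ∃ a : K, a • (e : M) = f x := fun x ↦ by
    obtain ⟨a, ha⟩ := hspan ⟨f x, x, rfl⟩
    exact ⟨a, congrArg Subtype.val ha⟩
  obtain ⟨c, hc⟩ := hcoord (g e)
  refine ⟨c, ContinuousLinearMap.ext fun x ↦ ?_⟩
  obtain ⟨a, ha⟩ := hcoord x
  change f (g (f x)) = c • f x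
  rw [← ha, map_smul, map_smul, ← hc, smul_comm]

theorem isIdempotentElem_mul_mul_star_of_mem_unitary {R : Type*} [Monoid R] [StarMul R] {p U : R}
    (hp : IsIdempotentElem p) (hU : U ∈ unitary R) : IsIdempotentElem (U * p * star U) :=
  calc U * p * star U * (U * p * star U) = U * (p * (star U * U) * p) * star U := by
        simp only [mul_assoc]
    _ = U * p * star U := by rw [Unitary.star_mul_self_of_mem hU, mul_one, hp.eq]

theorem mul_self_eq_smul_of_tendsto_smul_idempotent {R E : Type*} [CommSemiring R] [Ring E]
    [Algebra R E] [TopologicalSpace E] [IsTopologicalRing E] [ContinuousConstSMul R E] [T2Space E]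
    {ι : Type*} {l : Filter ι} [l.NeBot] {S : ι → E} (hS : ∀ i, IsIdempotentElem (S i))
    {c : R} {T : E} (h : Tendsto (fun i ↦ c • S i) l (𝓝 T)) : T * T = c • T := by
  have hsq : (fun i ↦ (c • S i) * (c • S i)) = fun i ↦ c • (c • S i) := by
    funext i
    rw [smul_mul_smul_comm, (hS i).eq, ← smul_smul]
  exact tendsto_nhds_unique (hsq ▸ h.mul h) (h.const_smul c)

theorem CStarRing.norm_eq_of_tendsto_smul_unitary_conj {E : Type*} [NormedRing E] [StarRing E]
    [CStarRing E] [NormedSpace ℂ E] [IsScalarTower ℂ E E] [SMulCommClass ℂ E E]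
    {ι : Type*} {l : Filter ι} [l.NeBot] {U : ι → E} (hU : ∀ i, U i ∈ unitary E) {A B : E} {c : ℂ}
    (h : Tendsto (fun i ↦ c • (U i * A * star (U i))) l (𝓝 B)) : ‖B‖ = ‖c • A‖ := by
  have hnorm : ∀ i, ‖c • (U i * A * star (U i))‖ = ‖c • A‖ := fun i ↦ by
    rw [← smul_mul_assoc, ← mul_smul_comm, norm_mul_mem_unitary _ (Unitary.star_mem (hU i)),
      norm_mem_unitary_mul _ (hU i)]
  exact tendsto_nhds_unique h.norm (by simp only [hnorm, tendsto_const_nhds])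

theorem stmt5_general {H : Type*} [NormedAddCommGroup H] [InnerProductSpace ℂ H] [CompleteSpace H]
    (phi : (H →L[ℂ] H) → (H →L[ℂ] H))
    (hmul : ∀ A B, phi (A * B) = phi A * phi B)
    (hproj : ∀ P, IsRankOneProj P → IsRankOneProj (phi P))
    (hloc : ∀ (A : H →L[ℂ] H) (lam : ℂ), ∃ U : ℕ → H →L[ℂ] H,
      (∀ n, U n ∈ unitary (H →L[ℂ] H)) ∧
      Filter.Tendsto (fun n => lam • (U n * A * star (U n))) Filter.atTop (nhds (phi (lam • A))))
    (P : H →L[ℂ] H) (hP : IsRankOneProj P) (lam : ℂ) :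
    phi (lam • P) = lam • phi P := by
  obtain ⟨-, hQQ, hQr⟩ := hproj P hP
  obtain ⟨-, hPP, hPr⟩ := hP
  obtain ⟨U, hU, hlim⟩ := hloc P lam
  set Q := phi P
  set T := phi (lam • P)
  obtain ⟨μ, hμ⟩ := Q.exists_mul_mul_eq_smul_of_rank_range_eq_one hQr T
  have hQTQ : Q * T * Q = T := by simp only [Q, T, ← hmul, mul_smul_comm, smul_mul_assoc, hPP]
  rw [hQTQ] at hμ
  have hTT : T * T = lam • T :=
    mul_self_eq_smul_of_tendsto_smul_idempotent
      (fun n ↦ isIdempotentElem_mul_mul_star_of_mem_unitary hPP (hU n)) hlim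
  have hnorm : ‖T‖ = ‖lam • P‖ := CStarRing.norm_eq_of_tendsto_smul_unitary_conj hU hlim
  have hμlam : (μ - lam) * μ = 0 := by
    have hQ0 := Q.ne_zero_of_rank_range_eq_one hQr
    rw [hμ, smul_mul_smul_comm, hQQ, smul_smul] at hTT
    rw [sub_mul, sub_eq_zero]
    exact smul_left_injective ℂ hQ0 hTT
  rcases mul_eq_zero.mp hμlam with h | rfl
  · rw [hμ, sub_eq_zero.mp h]
  · have hlam : lam = 0 := by
      rw [hμ, zero_smul, norm_zero, eq_comm, norm_eq_zero, smul_eq_zero] at hnorm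
      exact hnorm.resolve_right (P.ne_zero_of_rank_range_eq_one hPr)
    rw [hμ, hlam]

theorem stmt5 {H : Type*} [NormedAddCommGroup H] [InnerProductSpace ℂ H] [CompleteSpace H]
    [TopologicalSpace.SeparableSpace H]
    (phi : (H →L[ℂ] H) → (H →L[ℂ] H))
    (hmul : ∀ A B, phi (A * B) = phi A * phi B)
    (hproj : ∀ P, IsRankOneProj P → IsRankOneProj (phi P))
    (hloc : ∀ (A : H →L[ℂ] H) (lam : ℂ), ∃ U : ℕ → H →L[ℂ] H,
      (∀ n, U n ∈ unitary (H →L[ℂ] H)) ∧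
      Filter.Tendsto (fun n => lam • (U n * A * star (U n))) Filter.atTop (nhds (phi (lam • A))))
    (P : H →L[ℂ] H) (hP : IsRankOneProj P) (lam : ℂ) :
    phi (lam • P) = lam • phi P :=
  stmt5_general phi hmul hproj hloc P hP lam
end

section
/- Let U be a linear isometry on a separable complex Hilbert space H. Then there exists a sequence (U_n) of unitary operators converging to U in the strong operator topology, and consequently U_n A U_n* → U A U* in operator norm for every compact operator A. -/
/-!
Let `d` be a dense sequence in `H` and `M` the finite-dimensional span of `d 0, …, d (n-1)` and
their images under `U`. The restriction of `U` to the span of the `d i` maps isometrically into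
`M`, so it extends to a unitary of `M`, and then, by the identity on `Mᗮ`, to a unitary `V n` of
`H` agreeing with `U` on `d 0, …, d (n-1)`. Being uniformly bounded, the `V n` converge to `U`
strongly, hence uniformly on compact sets, so `(V n - U) A → 0` and `(V n - U) A† → 0` in norm
for compact `A` (`A†` is compact because `‖A† x‖² ≤ ‖x‖ ‖A A† x‖`). These two terms control
`V n A (V n)† - U A U†`.
-/

open scoped ComplexOrder

open Filter Topology Metric

section Equicontinuous

variable {ι X α : Type*} [TopologicalSpace X] [UniformSpace α] {F : ι → X → α} {f : X → α}
  {l : Filter ι}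

theorem Equicontinuous.tendstoUniformlyOn_of_tendsto (hF : Equicontinuous F)
    (h : ∀ x, Tendsto (F · x) l (𝓝 (f x))) {K : Set X} (hK : IsCompact K) :
    TendstoUniformlyOn F f l K := by
  have := (EquicontinuousOn.tendsto_uniformOnFun_iff_pi (𝔖 := {K | IsCompact K})
    (fun _ hK ↦ hK) (Set.sUnion_eq_univ_iff.2 fun x ↦ ⟨{x}, isCompact_singleton, rfl⟩)
    (fun K _ ↦ hF.equicontinuousOn K) l f).2 (tendsto_pi_nhds.2 h)
  exact UniformOnFun.tendsto_iff_tendstoUniformlyOn.1 this K hK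

theorem Equicontinuous.tendsto_of_denseRange {κ : Type*} {d : κ → X} (hd : DenseRange d)
    (hF : Equicontinuous F) (hf : Continuous f) (h : ∀ k, Tendsto (F · (d k)) l (𝓝 (f (d k))))
    (x : X) : Tendsto (F · x) l (𝓝 (f x)) := by
  have hclosed := hF.isClosed_setOfPred_tendsto (l := l) hf
  have : Set.range d ⊆ {x | Tendsto (F · x) l (𝓝 (f x))} := Set.range_subset_iff.2 h
  exact hclosed.closure_subset_iff.2 this (hd x)

end Equicontinuous

section Operator

variable {𝕜 E F G ι : Type*} [RCLike 𝕜] [NormedAddCommGroup E] [NormedSpace 𝕜 E]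
  [NormedAddCommGroup F] [NormedSpace 𝕜 F] [NormedAddCommGroup G] [NormedSpace 𝕜 G]
  {l : Filter ι}

theorem ContinuousLinearMap.equicontinuous_of_norm_le {T : ι → E →L[𝕜] F}
    (hT : ∃ C, ∀ i, ‖T i‖ ≤ C) : Equicontinuous fun i ↦ ⇑(T i) :=
  (NormedSpace.equicontinuous_TFAE T).out 5 1 |>.1 hT

theorem ContinuousLinearMap.tendsto_comp_of_isCompactOperator {T : ι → E →L[𝕜] F}
    {S : E →L[𝕜] F} (hT : ∃ C, ∀ i, ‖T i‖ ≤ C) (h : ∀ x, Tendsto (T · x) l (𝓝 (S x)))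
    {A : G →L[𝕜] E} (hA : IsCompactOperator A) :
    Tendsto (fun i ↦ (T i).comp A) l (𝓝 (S.comp A)) := by
  have hunif := (equicontinuous_of_norm_le hT).tendstoUniformlyOn_of_tendsto h
    (IsCompactOperator.isCompact_closure_image_closedBall (f := (A : G →ₗ[𝕜] E)) hA 1)
  refine Metric.tendsto_nhds.2 fun ε hε ↦ ?_
  filter_upwards [Metric.tendstoUniformlyOn_iff.1 hunif (ε / 2) (half_pos hε)] with i hi
  rw [dist_eq_norm, ← ContinuousLinearMap.sub_comp]
  refine lt_of_le_of_lt (opNorm_le_of_unit_norm (half_pos hε).le fun x hx ↦ ?_) (half_lt_self hε)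
  have := hi (A x) (subset_closure ⟨x, by simp [hx], rfl⟩)
  rw [dist_eq_norm'] at this
  exact this.le

end Operator

theorem TotallyBounded.image_of_dist_lt_of_dist_lt {α β γ : Type*} [PseudoMetricSpace β]
    [PseudoMetricSpace γ] {s : Set α} {f : α → β} {g : α → γ} (hg : TotallyBounded (g '' s))
    (hfg : ∀ ε > 0, ∃ δ > 0, ∀ x ∈ s, ∀ y ∈ s, dist (g x) (g y) < δ → dist (f x) (f y) < ε) :
    TotallyBounded (f '' s) := by
  refine Metric.totallyBounded_iff.2 fun ε hε ↦ ?_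
  obtain ⟨δ, hδ, hfg⟩ := hfg ε hε
  obtain ⟨u, hus, hufin, hcover⟩ : ∃ u ⊆ s, u.Finite ∧ g '' s ⊆ ⋃ z ∈ g '' u, ball z δ :=
    Set.exists_subset_image_finite_and.1 (Metric.finite_approx_of_totallyBounded hg δ hδ)
  refine ⟨f '' u, hufin.image f, ?_⟩
  rintro _ ⟨x, hx, rfl⟩
  obtain ⟨_, ⟨y, hy, rfl⟩, hxy⟩ := Set.mem_iUnion₂.1 (hcover ⟨x, hx, rfl⟩)
  exact Set.mem_iUnion₂.2 ⟨f y, ⟨y, hy, rfl⟩, hfg x hx y (hus hy) hxy⟩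

section Adjoint

open scoped InnerProduct
open ContinuousLinearMap

variable {𝕜 E F : Type*} [RCLike 𝕜] [NormedAddCommGroup E] [InnerProductSpace 𝕜 E]
  [CompleteSpace E] [NormedAddCommGroup F] [InnerProductSpace 𝕜 F] [CompleteSpace F]

theorem ContinuousLinearMap.norm_adjoint_apply_sq_le (A : E →L[𝕜] F) (y : F) :
    ‖(A†) y‖ ^ 2 ≤ ‖y‖ * ‖A ((A†) y)‖ := by
  rw [apply_norm_sq_eq_inner_adjoint_right, adjoint_adjoint]
  exact (RCLike.re_le_norm _).trans (norm_inner_le_norm _ _)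

theorem IsCompactOperator.adjoint {A : E →L[𝕜] F} (hA : IsCompactOperator A) :
    IsCompactOperator (A†) := by
  refine (isCompactOperator_iff_isCompact_closure_image_closedBall (A† : F →ₗ[𝕜] E) one_pos).2 ?_
  have hAA : TotallyBounded ((A ∘L A† : F →ₗ[𝕜] F) '' closedBall 0 1) :=
    ((hA.comp_clm (A†)).isCompact_closure_image_closedBall 1).totallyBounded.subset
      subset_closure
  refine TotallyBounded.isCompact_of_isClosed (TotallyBounded.closure <|
    hAA.image_of_dist_lt_of_dist_lt (f := A†) fun ε hε ↦
      ⟨ε ^ 2 / 2, by positivity, fun x hx y hy hxy ↦ ?_⟩) isClosed_closure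
  rw [dist_eq_norm, ← map_sub] at hxy ⊢
  have hxy2 : ‖x - y‖ ≤ 2 := by
    rw [mem_closedBall_zero_iff] at hx hy
    linarith [norm_sub_le x y]
  refine lt_of_pow_lt_pow_left₀ 2 hε.le ?_
  calc ‖(A†) (x - y)‖ ^ 2 ≤ ‖x - y‖ * ‖A ((A†) (x - y))‖ := norm_adjoint_apply_sq_le A _
    _ ≤ 2 * ‖A ((A†) (x - y))‖ := by gcongr
    _ < ε ^ 2 := by simp only [coe_coe, comp_apply] at hxy; linarith

end Adjoint

theorem norm_mul_mul_star_sub_le {R : Type*} [NormedRing R] [StarRing R] [NormedStarGroup R]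
    {u v : R} (a : R) (hu : ‖u‖ ≤ 1) (hv : ‖v‖ ≤ 1) :
    ‖v * a * star v - u * a * star u‖ ≤ ‖v * a - u * a‖ + ‖v * star a - u * star a‖ := by
  have hsplit : v * a * star v - u * a * star u =
      (v * a - u * a) * star v + u * star (v * star a - u * star a) := by
    simp only [star_sub, star_mul, star_star]
    noncomm_ring
  rw [hsplit]
  refine (norm_add_le_of_le (norm_mul_le _ _) (norm_mul_le _ _)).trans ?_
  rw [norm_star, norm_star]
  exact add_le_add (mul_le_of_le_one_right (norm_nonneg _) hv)
    (mul_le_of_le_one_left (norm_nonneg _) hu)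

theorem tendsto_mul_mul_star_of_isCompactOperator {𝕜 H ι : Type*} [RCLike 𝕜]
    [NormedAddCommGroup H] [InnerProductSpace 𝕜 H] [CompleteSpace H] {l : Filter ι}
    {V : ι → H →L[𝕜] H} {U : H →L[𝕜] H} (hV : ∀ i, ‖V i‖ ≤ 1) (hU : ‖U‖ ≤ 1)
    (h : ∀ x, Tendsto (V · x) l (𝓝 (U x))) {A : H →L[𝕜] H} (hA : IsCompactOperator A) :
    Tendsto (fun i ↦ V i * A * star (V i)) l (𝓝 (U * A * star U)) := by
  have h₁ : Tendsto (V · * A) l (𝓝 (U * A)) :=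
    ContinuousLinearMap.tendsto_comp_of_isCompactOperator ⟨1, hV⟩ h hA
  have h₂ : Tendsto (V · * star A) l (𝓝 (U * star A)) :=
    ContinuousLinearMap.tendsto_comp_of_isCompactOperator ⟨1, hV⟩ h hA.adjoint
  rw [tendsto_iff_norm_sub_tendsto_zero] at h₁ h₂ ⊢
  refine squeeze_zero (fun _ ↦ norm_nonneg _) (fun i ↦ norm_mul_mul_star_sub_le A hU (hV i)) ?_
  simpa using h₁.add h₂

namespace Submodule

variable {𝕜 E : Type*} [RCLike 𝕜] [NormedAddCommGroup E] [InnerProductSpace 𝕜 E]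
  (K : Submodule 𝕜 E) [K.HasOrthogonalProjection]

noncomputable def extendByIdOrthogonalL (e : K ≃ₗᵢ[𝕜] K) : E →L[𝕜] E :=
  K.subtypeL ∘L (e.toContinuousLinearEquiv : K →L[𝕜] K) ∘L K.orthogonalProjectionOnto +
    Kᗮ.starProjection

variable {K}

theorem extendByIdOrthogonalL_apply_add (e : K ≃ₗᵢ[𝕜] K) (k : K) {q : E} (hq : q ∈ Kᗮ) :
    K.extendByIdOrthogonalL e (k + q) = e k + q := by
  simp [extendByIdOrthogonalL, orthogonalProjectionOnto_apply_of_mem_orthogonal hq,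
    (starProjection_apply_eq_zero_iff K).2 hq]

theorem norm_extendByIdOrthogonalL_apply (e : K ≃ₗᵢ[𝕜] K) (x : E) :
    ‖K.extendByIdOrthogonalL e x‖ = ‖x‖ := by
  obtain ⟨k, hk, q, hq, rfl⟩ := K.exists_add_mem_mem_orthogonal x
  lift k to K using hk
  have pythagoras : ∀ k' ∈ K, ‖k' + q‖ ^ 2 = ‖k'‖ ^ 2 + ‖q‖ ^ 2 := fun k' hk' ↦ by
    simpa only [sq] using norm_add_sq_eq_norm_sq_add_norm_sq_of_inner_eq_zero k' q
      (inner_right_of_mem_orthogonal hk' hq)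
  rw [← sq_eq_sq₀ (norm_nonneg _) (norm_nonneg _), extendByIdOrthogonalL_apply_add e _ hq,
    pythagoras _ (e k).2, pythagoras k k.2]
  exact congrArg (· ^ 2 + ‖q‖ ^ 2) (e.norm_map k)

theorem surjective_extendByIdOrthogonalL (e : K ≃ₗᵢ[𝕜] K) :
    Function.Surjective (K.extendByIdOrthogonalL e) := by
  intro y
  obtain ⟨k, hk, q, hq, rfl⟩ := K.exists_add_mem_mem_orthogonal y
  lift k to K using hk
  exact ⟨e.symm k + q, by simp [extendByIdOrthogonalL_apply_add e _ hq]⟩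

theorem extendByIdOrthogonalL_apply_coe (e : K ≃ₗᵢ[𝕜] K) (k : K) :
    K.extendByIdOrthogonalL e k = e k := by
  simpa using extendByIdOrthogonalL_apply_add e k Kᗮ.zero_mem

variable (K) in
noncomputable def extendByIdOrthogonal (e : K ≃ₗᵢ[𝕜] K) : E ≃ₗᵢ[𝕜] E :=
  .ofSurjective ⟨K.extendByIdOrthogonalL e, norm_extendByIdOrthogonalL_apply e⟩
    (surjective_extendByIdOrthogonalL e)

@[simp]
theorem extendByIdOrthogonal_apply_coe (e : K ≃ₗᵢ[𝕜] K) (k : K) :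
    K.extendByIdOrthogonal e k = e k :=
  extendByIdOrthogonalL_apply_coe e k

end Submodule

theorem LinearIsometry.exists_linearIsometryEquiv_eqOn {𝕜 E : Type*} [RCLike 𝕜]
    [NormedAddCommGroup E] [InnerProductSpace 𝕜 E] (T : E →ₗᵢ[𝕜] E) (K : Submodule 𝕜 E)
    [FiniteDimensional 𝕜 K] : ∃ V : E ≃ₗᵢ[𝕜] E, ∀ x ∈ K, V x = T x := by
  set M := K ⊔ K.map T.toLinearMap
  let S : Submodule 𝕜 M := K.comap M.subtype
  let L : S →ₗᵢ[𝕜] M :=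
    { toLinearMap := (T.toLinearMap ∘ₗ M.subtype ∘ₗ S.subtype).codRestrict M
        fun s ↦ Submodule.mem_sup_right (Submodule.mem_map_of_mem s.2)
      norm_map' := fun s ↦ T.norm_map s }
  refine ⟨M.extendByIdOrthogonal (L.extend.toLinearIsometryEquiv rfl), fun x hx ↦ ?_⟩
  have hxM : x ∈ M := Submodule.mem_sup_left hx
  calc _ = ((L.extend.toLinearIsometryEquiv rfl ⟨x, hxM⟩ : M) : E) :=
        M.extendByIdOrthogonal_apply_coe _ ⟨x, hxM⟩
    _ = T x := congrArg Subtype.val (L.extend_apply ⟨⟨x, hxM⟩, hx⟩)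

theorem stmt12 {H : Type*} [NormedAddCommGroup H] [InnerProductSpace ℂ H] [CompleteSpace H]
    [TopologicalSpace.SeparableSpace H]
    (U : H →L[ℂ] H) (hU : ∀ x, ‖U x‖ = ‖x‖) :
    ∃ V : ℕ → H →L[ℂ] H,
      (∀ n, V n ∈ unitary (H →L[ℂ] H)) ∧
      (∀ x : H, Filter.Tendsto (fun n => V n x) Filter.atTop (nhds (U x))) ∧
      (∀ A : H →L[ℂ] H, IsCompactOperator A →
        Filter.Tendsto (fun n => V n * A * star (V n)) Filter.atTop
          (nhds (U * A * ContinuousLinearMap.adjoint U))) := by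
  classical
  have : Nonempty H := ⟨0⟩
  set d := TopologicalSpace.denseSeq H
  let T : H →ₗᵢ[ℂ] H := { toLinearMap := U, norm_map' := hU }
  choose V hV using fun n ↦
    T.exists_linearIsometryEquiv_eqOn (Submodule.span ℂ ((Finset.range n).image d : Set H))
  have hV_norm : ∀ n, ‖(V n : H →L[ℂ] H)‖ ≤ 1 :=
    fun n ↦ (V n).toLinearIsometry.norm_toContinuousLinearMap_le
  have hV_dense : ∀ k, Tendsto (fun n ↦ V n (d k)) atTop (𝓝 (U (d k))) := fun k ↦
    tendsto_const_nhds.congr' <| (eventually_gt_atTop k).mono fun n hn ↦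
      (hV n (d k) (Submodule.subset_span (by simpa using ⟨k, hn, rfl⟩))).symm
  have hV_strong : ∀ x, Tendsto (fun n ↦ V n x) atTop (𝓝 (U x)) :=
    (ContinuousLinearMap.equicontinuous_of_norm_le ⟨1, hV_norm⟩).tendsto_of_denseRange
      (TopologicalSpace.denseRange_denseSeq H) U.continuous hV_dense
  refine ⟨fun n ↦ V n, fun n ↦ (Unitary.linearIsometryEquiv.symm (V n)).2, hV_strong,
    fun A hA ↦ ?_⟩
  rw [← ContinuousLinearMap.star_eq_adjoint]
  exact tendsto_mul_mul_star_of_isCompactOperator hV_norm T.norm_toContinuousLinearMap_le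
    hV_strong hA
end

section
/- On a separable infinite-dimensional Hilbert space H, there exists an uncountable family of infinite-rank orthogonal projections such that the product of any two distinct members has finite rank. -/
open scoped ComplexOrder

/-!
Prefixes of binary sequences form an uncountable family of infinite subsets of the countable
set `List Bool` in which any two distinct members meet in a finite set: two sequences share
only the prefixes shorter than the first place where they differ. Indexing an orthonormal
sequence `e` of `H` by `List Bool`, each such set `A` gives the orthogonal projection
`spanProj ℂ e A` onto the closed span of `{e i | i ∈ A}`, of infinite rank. Since it fixes
`e j` for `j ∈ A` and kills it otherwise, `spanProj ℂ e A * spanProj ℂ e B` maps into the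
closed span over `A ∩ B`, which is finite dimensional when `A ∩ B` is finite.
-/

section Orthonormal

open Submodule InnerProductSpace

variable {𝕜 E ι : Type*} [RCLike 𝕜] [NormedAddCommGroup E] [InnerProductSpace 𝕜 E]

theorem exists_orthonormal_of_not_finiteDimensional [Countable ι]
    (h : ¬ FiniteDimensional 𝕜 E) : ∃ e : ι → E, Orthonormal 𝕜 e := by
  let b := Module.Basis.ofVectorSpace 𝕜 E
  have : Infinite (Module.Basis.ofVectorSpaceIndex 𝕜 E) :=
    not_finite_iff_infinite.1 fun _ => h (Module.Finite.of_basis b)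
  have hv : LinearIndependent 𝕜 (b ∘ Infinite.natEmbedding _) :=
    b.linearIndependent.comp _ (Infinite.natEmbedding _).injective
  obtain ⟨f, hf⟩ := Countable.exists_injective_nat ι
  exact ⟨gramSchmidtNormed 𝕜 _ ∘ f, (gramSchmidtNormed_orthonormal hv).comp f hf⟩

variable {e : ι → E} {A B : Set ι} {j : ι}

theorem Orthonormal.mem_orthogonal_closure_span_image (he : Orthonormal 𝕜 e) (hj : j ∉ A) :
    e j ∈ (span 𝕜 (e '' A)).topologicalClosureᗮ := by
  have hortho : span 𝕜 {e j} ⟂ span 𝕜 (e '' A) := by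
    rw [isOrtho_span]
    rintro _ rfl _ ⟨i, hi, rfl⟩
    exact he.inner_eq_zero (ne_of_mem_of_not_mem hi hj).symm
  rw [orthogonal_closure]
  exact hortho (mem_span_singleton_self _)

theorem Orthonormal.mem_closure_span_image_iff (he : Orthonormal 𝕜 e) :
    e j ∈ (span 𝕜 (e '' A)).topologicalClosure ↔ j ∈ A := by
  refine ⟨fun hmem => by_contra fun hj => he.ne_zero j ?_, fun hj => ?_⟩
  · exact inner_self_eq_zero.1 (inner_right_of_mem_orthogonal hmem
      (he.mem_orthogonal_closure_span_image hj))
  · exact le_topologicalClosure _ (subset_span (Set.mem_image_of_mem e hj))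

theorem Orthonormal.not_finiteDimensional_closure_span_image (he : Orthonormal 𝕜 e)
    (hA : A.Infinite) : ¬ FiniteDimensional 𝕜 (span 𝕜 (e '' A)).topologicalClosure := by
  intro _
  have : Infinite A := hA.to_subtype
  let v : A → (span 𝕜 (e '' A)).topologicalClosure :=
    fun i => ⟨e i, he.mem_closure_span_image_iff.2 i.2⟩
  exact Module.Finite.not_linearIndependent_of_infinite v
    (.of_comp (Submodule.subtype _) (he.linearIndependent.comp _ Subtype.val_injective))

variable [CompleteSpace E]

variable (𝕜) in
noncomputable def spanProj (e : ι → E) (A : Set ι) : E →L[𝕜] E :=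
  (span 𝕜 (e '' A)).closure.starProjection

theorem range_spanProj (e : ι → E) (A : Set ι) :
    LinearMap.range (spanProj 𝕜 e A : E →ₗ[𝕜] E) = (span 𝕜 (e '' A)).topologicalClosure :=
  range_starProjection _

theorem Orthonormal.spanProj_apply_self_iff (he : Orthonormal 𝕜 e) :
    spanProj 𝕜 e A (e j) = e j ↔ j ∈ A :=
  starProjection_eq_self_iff.trans he.mem_closure_span_image_iff

theorem Orthonormal.spanProj_apply_of_notMem (he : Orthonormal 𝕜 e) (hj : j ∉ A) :
    spanProj 𝕜 e A (e j) = 0 :=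
  (starProjection_apply_eq_zero_iff _).2 (he.mem_orthogonal_closure_span_image hj)

theorem Orthonormal.spanProj_injective (he : Orthonormal 𝕜 e) :
    Function.Injective (spanProj 𝕜 e) := fun A B hAB => Set.ext fun j => by
  rw [← he.spanProj_apply_self_iff, ← he.spanProj_apply_self_iff, hAB]

theorem Orthonormal.range_spanProj_mul_le (he : Orthonormal 𝕜 e) (A B : Set ι) :
    LinearMap.range ((spanProj 𝕜 e A * spanProj 𝕜 e B : E →L[𝕜] E) : E →ₗ[𝕜] E) ≤
      (span 𝕜 (e '' (A ∩ B))).topologicalClosure := by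
  set S := (span 𝕜 (e '' (A ∩ B))).topologicalClosure
  have hspan : span 𝕜 (e '' B) ≤ S.comap (spanProj 𝕜 e A : E →ₗ[𝕜] E) := by
    rw [span_le]
    rintro _ ⟨j, hj, rfl⟩
    show spanProj 𝕜 e A (e j) ∈ S
    by_cases hjA : j ∈ A
    · rw [he.spanProj_apply_self_iff.2 hjA]
      exact le_topologicalClosure _ (subset_span ⟨j, ⟨hjA, hj⟩, rfl⟩)
    · rw [he.spanProj_apply_of_notMem hjA]
      exact S.zero_mem
  have hclosed : IsClosed (S.comap (spanProj 𝕜 e A : E →ₗ[𝕜] E) : Set E) :=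
    isClosed_closure.preimage (spanProj 𝕜 e A).continuous
  rintro _ ⟨x, rfl⟩
  exact topologicalClosure_minimal _ hspan hclosed
    (range_spanProj (𝕜 := 𝕜) e B ▸ LinearMap.mem_range_self _ x)

theorem Orthonormal.finiteDimensional_range_spanProj_mul (he : Orthonormal 𝕜 e)
    (hAB : (A ∩ B).Finite) :
    FiniteDimensional 𝕜
      (LinearMap.range ((spanProj 𝕜 e A * spanProj 𝕜 e B : E →L[𝕜] E) : E →ₗ[𝕜] E)) := by
  have : FiniteDimensional 𝕜 (span 𝕜 (e '' (A ∩ B))) :=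
    FiniteDimensional.span_of_finite 𝕜 (hAB.image e)
  have hclosed : (span 𝕜 (e '' (A ∩ B))).topologicalClosure = span 𝕜 (e '' (A ∩ B)) :=
    (closed_of_finiteDimensional _).submodule_topologicalClosure_eq
  exact finiteDimensional_of_le ((he.range_spanProj_mul_le A B).trans hclosed.le)

theorem Orthonormal.not_finiteDimensional_range_spanProj (he : Orthonormal 𝕜 e)
    (hA : A.Infinite) :
    ¬ FiniteDimensional 𝕜 (LinearMap.range (spanProj 𝕜 e A : E →ₗ[𝕜] E)) := by
  rw [range_spanProj]
  exact he.not_finiteDimensional_closure_span_image hA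

end Orthonormal

section Prefixes

variable {α : Type*}

def prefixes (x : ℕ → α) : Set (List α) :=
  Set.range fun n => List.ofFn fun i : Fin n => x i

theorem ofFn_eq_ofFn_iff {x y : ℕ → α} {n m : ℕ} :
    (List.ofFn fun i : Fin n => x i) = List.ofFn (fun i : Fin m => y i) ↔
      n = m ∧ ∀ i < n, x i = y i := by
  constructor
  · intro h
    obtain rfl : n = m := by simpa using congrArg List.length h
    exact ⟨rfl, fun i hi => congrFun (List.ofFn_injective h) ⟨i, hi⟩⟩
  · rintro ⟨rfl, h⟩
    exact congrArg List.ofFn (funext fun i => h i i.2)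

theorem prefixes_infinite (x : ℕ → α) : (prefixes x).Infinite :=
  Set.infinite_range_of_injective fun _ _ h => (ofFn_eq_ofFn_iff.1 h).1

theorem prefixes_injective : Function.Injective (prefixes (α := α)) := by
  intro x y h
  funext n
  obtain ⟨m, hm⟩ : List.ofFn (fun i : Fin (n + 1) => x i) ∈ prefixes y := h ▸ ⟨n + 1, rfl⟩
  obtain ⟨rfl, hxy⟩ := ofFn_eq_ofFn_iff.1 hm
  exact (hxy n (by omega)).symm

theorem prefixes_inter_finite {x y : ℕ → α} (hxy : x ≠ y) :
    (prefixes x ∩ prefixes y).Finite := by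
  obtain ⟨k, hk⟩ := Function.ne_iff.1 hxy
  refine ((Set.finite_Iic k).image fun n => List.ofFn fun i : Fin n => x i).subset ?_
  rintro _ ⟨⟨n, rfl⟩, ⟨m, hm⟩⟩
  obtain ⟨rfl, hyx⟩ := ofFn_eq_ofFn_iff.1 hm
  exact ⟨m, Set.mem_Iic.2 (not_lt.1 fun hkm => hk (hyx k hkm).symm), rfl⟩

end Prefixes

theorem stmt16_general {H : Type*} [NormedAddCommGroup H] [InnerProductSpace ℂ H] [CompleteSpace H]
    (hinf : ¬ FiniteDimensional ℂ H) :
    ∃ Ps : Set (H →L[ℂ] H), ¬ Ps.Countable ∧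
      (∀ P ∈ Ps, IsSelfAdjoint P ∧ P * P = P ∧ ¬ FiniteDimensional ℂ (LinearMap.range (P : H →ₗ[ℂ] H))) ∧
      (∀ P ∈ Ps, ∀ Q ∈ Ps, P ≠ Q → FiniteDimensional ℂ (LinearMap.range ((P * Q : H →L[ℂ] H) : H →ₗ[ℂ] H))) := by
  obtain ⟨e, he⟩ := exists_orthonormal_of_not_finiteDimensional (ι := List Bool) hinf
  let P : (ℕ → Bool) → H →L[ℂ] H := fun x => spanProj ℂ e (prefixes x)
  have hP : Function.Injective P := he.spanProj_injective.comp prefixes_injective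
  have : Uncountable (ℕ → Bool) :=
    Cardinal.aleph0_lt_mk_iff.1 (by simpa using Cardinal.cantor Cardinal.aleph0)
  refine ⟨Set.range P, fun hc => ?_, ?_, ?_⟩
  · have := hc.to_subtype
    exact not_countable (Set.rangeFactorization_injective.2 hP).countable
  · rintro _ ⟨x, rfl⟩
    exact ⟨isSelfAdjoint_starProjection _, Submodule.isIdempotentElem_starProjection _,
      he.not_finiteDimensional_range_spanProj (prefixes_infinite x)⟩
  · rintro _ ⟨x, rfl⟩ _ ⟨y, rfl⟩ hxy
    exact he.finiteDimensional_range_spanProj_mul (prefixes_inter_finite (ne_of_apply_ne P hxy))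

theorem stmt16 {H : Type*} [NormedAddCommGroup H] [InnerProductSpace ℂ H] [CompleteSpace H]
    [TopologicalSpace.SeparableSpace H] (hinf : ¬ FiniteDimensional ℂ H) :
    ∃ Ps : Set (H →L[ℂ] H), ¬ Ps.Countable ∧
      (∀ P ∈ Ps, IsSelfAdjoint P ∧ P * P = P ∧ ¬ FiniteDimensional ℂ (LinearMap.range (P : H →ₗ[ℂ] H))) ∧
      (∀ P ∈ Ps, ∀ Q ∈ Ps, P ≠ Q → FiniteDimensional ℂ (LinearMap.range ((P * Q : H →L[ℂ] H) : H →ₗ[ℂ] H))) :=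
  stmt16_general hinf
end

section
/- Let H be infinite-dimensional and let V be a non-surjective linear isometry on H and L a linear (possibly unbounded, everywhere-defined) operator whose range is orthogonal to the range of V. Then the map on finite-rank operators sending Σᵢ xᵢ ⊗ yᵢ to Σᵢ (V xᵢ) ⊗ ((V + L) yᵢ) is a well-defined multiplicative (algebra-endomorphism) map on F(H) that preserves rank. -/
open scoped ComplexOrder

/-!
Formally `Φ(A) = V A (V + L)†`. As `L` may be unbounded, `A (V + L)†` is taken to be the adjoint of
`(V + L) A†`, which is bounded when `A` has finite rank because `A†` then has finite-dimensional range.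
The relations `V†V = 1` and `V†L = 0` give `A (V + L)† V = A`; this yields
`Φ(A) Φ(B) = V A (V + L)† V B (V + L)† = Φ(AB)`, and shows that `A (V + L)†` has the same range as `A`,
so that `Φ(A) = V A (V + L)†` has the same rank as `A` since `V` is injective.
-/

open ContinuousLinearMap
open scoped InnerProduct InnerProductSpace

theorem LinearMap.continuous_comp_of_finiteDimensional_range {𝕜 E F G : Type*}
    [NontriviallyNormedField 𝕜] [CompleteSpace 𝕜]
    [NormedAddCommGroup E] [NormedSpace 𝕜 E] [NormedAddCommGroup F] [NormedSpace 𝕜 F]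
    [NormedAddCommGroup G] [NormedSpace 𝕜 G]
    (M : E →ₗ[𝕜] G) (T : F →L[𝕜] E) [FiniteDimensional 𝕜 (T : F →ₗ[𝕜] E).range] :
    Continuous (M ∘ₗ (T : F →ₗ[𝕜] E)) :=
  (M ∘ₗ (T : F →ₗ[𝕜] E).range.subtype).continuous_of_finiteDimensional.comp
    T.rangeRestrict.continuous

namespace ContinuousLinearMap

variable {𝕜 E F F' G : Type*} [RCLike 𝕜]
  [NormedAddCommGroup E] [InnerProductSpace 𝕜 E] [CompleteSpace E]
  [NormedAddCommGroup F] [InnerProductSpace 𝕜 F] [CompleteSpace F]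
  [NormedAddCommGroup F'] [InnerProductSpace 𝕜 F'] [CompleteSpace F']
  [NormedAddCommGroup G] [InnerProductSpace 𝕜 G] [CompleteSpace G]

theorem range_adjoint_eq_map_range (A : E →L[𝕜] F) [(A : E →ₗ[𝕜] F).range.HasOrthogonalProjection] :
    (A† : F →ₗ[𝕜] E).range = (A : E →ₗ[𝕜] F).range.map (A† : F →ₗ[𝕜] E) := by
  rw [← Submodule.map_top,
    ← Submodule.sup_orthogonal_of_hasOrthogonalProjection (K := (A : E →ₗ[𝕜] F).range), Submodule.map_sup,
    orthogonal_range, LinearMap.le_ker_iff_map.mp le_rfl, sup_bot_eq]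

instance finiteDimensional_range_adjoint (A : E →L[𝕜] F) [FiniteDimensional 𝕜 (A : E →ₗ[𝕜] F).range] :
    FiniteDimensional 𝕜 (A† : F →ₗ[𝕜] E).range := by
  rw [range_adjoint_eq_map_range]
  infer_instance

open Classical in
/-- `A.compFormalAdjoint M` is the operator `A M†` for a possibly unbounded `M`, defined as `(M A†)†`;
it is `0` when `M A†` is not continuous. -/
noncomputable def compFormalAdjoint (A : E →L[𝕜] F) (M : E →ₗ[𝕜] G) : G →L[𝕜] F :=
  if h : Continuous (M ∘ₗ (A† : F →ₗ[𝕜] E)) then (⟨M ∘ₗ A†, h⟩ : F →L[𝕜] G)† else 0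

variable {A B : E →L[𝕜] F} {M : E →ₗ[𝕜] G}

theorem compFormalAdjoint_of_continuous (hA : Continuous (M ∘ₗ (A† : F →ₗ[𝕜] E))) :
    A.compFormalAdjoint M = (⟨M ∘ₗ A†, hA⟩ : F →L[𝕜] G)† :=
  dif_pos hA

theorem compFormalAdjoint_eq_adjoint {T : F →L[𝕜] G} (hT : M ∘ₗ (A† : F →ₗ[𝕜] E) = T) :
    A.compFormalAdjoint M = T† := by
  rw [compFormalAdjoint_of_continuous (hT ▸ T.continuous)]
  exact congrArg adjoint (coe_injective hT)

theorem inner_compFormalAdjoint_apply (hA : Continuous (M ∘ₗ (A† : F →ₗ[𝕜] E))) (z : G) (u : F) :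
    ⟪A.compFormalAdjoint M z, u⟫_𝕜 = ⟪z, M ((A†) u)⟫_𝕜 := by
  rw [compFormalAdjoint_of_continuous hA, adjoint_inner_left]
  rfl

theorem compFormalAdjoint_add (hA : Continuous (M ∘ₗ (A† : F →ₗ[𝕜] E)))
    (hB : Continuous (M ∘ₗ (B† : F →ₗ[𝕜] E))) :
    (A + B).compFormalAdjoint M = A.compFormalAdjoint M + B.compFormalAdjoint M := by
  rw [compFormalAdjoint_of_continuous hA, compFormalAdjoint_of_continuous hB, ← map_add]
  refine compFormalAdjoint_eq_adjoint ?_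
  ext u
  simp

theorem comp_compFormalAdjoint (C : F →L[𝕜] F') (hA : Continuous (M ∘ₗ (A† : F →ₗ[𝕜] E))) :
    (C ∘L A).compFormalAdjoint M = C ∘L A.compFormalAdjoint M := by
  rw [compFormalAdjoint_of_continuous hA, compFormalAdjoint_eq_adjoint (T := ⟨_, hA⟩ ∘L C†),
    adjoint_comp, adjoint_adjoint]
  ext u
  simp

theorem compFormalAdjoint_comp_eq_self {V : E →L[𝕜] G} (hVM : ∀ x, (V†) (M x) = x)
    (hA : Continuous (M ∘ₗ (A† : F →ₗ[𝕜] E))) : A.compFormalAdjoint M ∘L V = A := by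
  ext z
  refine ext_inner_right 𝕜 fun u => ?_
  rw [comp_apply, inner_compFormalAdjoint_apply hA, ← adjoint_inner_right, hVM, adjoint_inner_right]

theorem range_compFormalAdjoint_le (hA : Continuous (M ∘ₗ (A† : F →ₗ[𝕜] E))) :
    (A.compFormalAdjoint M : G →ₗ[𝕜] F).range ≤ (A : E →ₗ[𝕜] F).range.topologicalClosure := by
  rw [← Submodule.orthogonal_orthogonal_eq_closure, orthogonal_range]
  rintro _ ⟨z, rfl⟩
  rw [Submodule.mem_orthogonal]
  intro w hw
  rw [inner_eq_zero_symm, coe_coe, inner_compFormalAdjoint_apply hA, show (A†) w = 0 from hw, map_zero,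
    inner_zero_right]

theorem range_compFormalAdjoint_eq {V : E →L[𝕜] G} (hVM : ∀ x, (V†) (M x) = x)
    [FiniteDimensional 𝕜 (A : E →ₗ[𝕜] F).range] :
    (A.compFormalAdjoint M : G →ₗ[𝕜] F).range = (A : E →ₗ[𝕜] F).range := by
  have hA := M.continuous_comp_of_finiteDimensional_range (A†)
  refine le_antisymm ?_ ?_
  · simpa only [(Submodule.closed_of_finiteDimensional _).submodule_topologicalClosure_eq]
      using range_compFormalAdjoint_le hA
  · conv_lhs => rw [← compFormalAdjoint_comp_eq_self hVM hA]
    exact LinearMap.range_comp_le_range _ _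

theorem comp_compFormalAdjoint_mul {A B : E →L[𝕜] E} {V : E →L[𝕜] G} (hVM : ∀ x, (V†) (M x) = x)
    (hA : Continuous (M ∘ₗ (A† : E →ₗ[𝕜] E))) (hB : Continuous (M ∘ₗ (B† : E →ₗ[𝕜] E))) :
    V ∘L (A * B).compFormalAdjoint M = (V ∘L A.compFormalAdjoint M) * (V ∘L B.compFormalAdjoint M) := by
  rw [mul_def, comp_compFormalAdjoint A hB]
  conv_lhs => rw [← compFormalAdjoint_comp_eq_self hVM hA]
  rfl

end ContinuousLinearMap

section RankOne

variable {H : Type*} [NormedAddCommGroup H] [InnerProductSpace ℂ H]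

theorem rankOne_apply (x y z : H) : rankOne x y z = ⟪y, z⟫_ℂ • x := rfl

variable [CompleteSpace H]

theorem adjoint_rankOne (x y : H) : (rankOne x y)† = rankOne y x := by
  ext z
  refine ext_inner_right ℂ fun u => ?_
  simp only [adjoint_inner_left, rankOne_apply, inner_smul_left, inner_smul_right, inner_conj_symm]
  ring

theorem sum_rankOne_compFormalAdjoint (M : H →ₗ[ℂ] H) {n : ℕ} (x y : Fin n → H) :
    (∑ i, rankOne (x i) (y i)).compFormalAdjoint M = ∑ i, rankOne (x i) (M (y i)) := by
  rw [compFormalAdjoint_eq_adjoint (T := ∑ i, rankOne (M (y i)) (x i))]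
  · simp only [map_sum, adjoint_rankOne]
  · ext z
    simp [adjoint_rankOne, rankOne_apply]

end RankOne

theorem stmt19_general {H : Type*} [NormedAddCommGroup H] [InnerProductSpace ℂ H] [CompleteSpace H]
    (V : H →L[ℂ] H) (hViso : ∀ x, ‖V x‖ = ‖x‖)
    (L : H →ₗ[ℂ] H) (hL : ∀ x y : H, (inner ℂ (V y) (L x) : ℂ) = 0) :
    ∃ Phi : (H →L[ℂ] H) → (H →L[ℂ] H),
      (∀ (n : ℕ) (x y : Fin n → H),
        Phi (∑ i, rankOne (x i) (y i)) = ∑ i, rankOne (V (x i)) (V (y i) + L (y i))) ∧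
      (∀ A B : H →L[ℂ] H, FiniteDimensional ℂ (LinearMap.range (A : H →ₗ[ℂ] H)) →
        FiniteDimensional ℂ (LinearMap.range (B : H →ₗ[ℂ] H)) →
        Phi (A + B) = Phi A + Phi B ∧ Phi (A * B) = Phi A * Phi B) ∧
      (∀ A : H →L[ℂ] H, FiniteDimensional ℂ (LinearMap.range (A : H →ₗ[ℂ] H)) →
        Module.rank ℂ (LinearMap.range (Phi A : H →ₗ[ℂ] H)) = Module.rank ℂ (LinearMap.range (A : H →ₗ[ℂ] H))) := by
  have hVV : ∀ x, (V†) (V x) = x :=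
    DFunLike.congr_fun ((norm_map_iff_adjoint_comp_self V).mp hViso)
  have hVL : ∀ x, (V†) (L x) = 0 := fun x =>
    ext_inner_right ℂ fun y => by rw [adjoint_inner_left, inner_zero_left, ← inner_conj_symm, hL, map_zero]
  have hVM : ∀ x, (V†) (((V : H →ₗ[ℂ] H) + L) x) = x := fun x => by
    rw [LinearMap.add_apply, map_add, coe_coe, hVV, hVL, add_zero]
  have hcont : ∀ A : H →L[ℂ] H, FiniteDimensional ℂ (A : H →ₗ[ℂ] H).range →
      Continuous (((V : H →ₗ[ℂ] H) + L) ∘ₗ (A† : H →ₗ[ℂ] H)) := fun A _ =>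
    ((V : H →ₗ[ℂ] H) + L).continuous_comp_of_finiteDimensional_range (A†)
  refine ⟨fun A => V ∘L A.compFormalAdjoint ((V : H →ₗ[ℂ] H) + L), fun n x y => ?_,
    fun A B hA hB => ⟨?_, comp_compFormalAdjoint_mul hVM (hcont A hA) (hcont B hB)⟩, fun A hA => ?_⟩
  · ext z
    simp only [sum_rankOne_compFormalAdjoint, comp_apply, sum_apply, rankOne_apply, map_sum, map_smul,
      LinearMap.add_apply, coe_coe, inner_add_left]
  · dsimp only
    rw [compFormalAdjoint_add (hcont A hA) (hcont B hB), comp_add]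
  · dsimp only
    rw [toLinearMap_comp, LinearMap.range_comp, range_compFormalAdjoint_eq hVM,
      rank_map_eq (Function.LeftInverse.injective hVV)]

theorem stmt19 {H : Type*} [NormedAddCommGroup H] [InnerProductSpace ℂ H] [CompleteSpace H]
    (hinf : ¬ FiniteDimensional ℂ H)
    (V : H →L[ℂ] H) (hViso : ∀ x, ‖V x‖ = ‖x‖) (hVns : ¬ Function.Surjective V)
    (L : H →ₗ[ℂ] H) (hL : ∀ x y : H, (inner ℂ (V y) (L x) : ℂ) = 0) :
    ∃ Phi : (H →L[ℂ] H) → (H →L[ℂ] H),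
      (∀ (n : ℕ) (x y : Fin n → H),
        Phi (∑ i, rankOne (x i) (y i)) = ∑ i, rankOne (V (x i)) (V (y i) + L (y i))) ∧
      (∀ A B : H →L[ℂ] H, FiniteDimensional ℂ (LinearMap.range (A : H →ₗ[ℂ] H)) →
        FiniteDimensional ℂ (LinearMap.range (B : H →ₗ[ℂ] H)) →
        Phi (A + B) = Phi A + Phi B ∧ Phi (A * B) = Phi A * Phi B) ∧
      (∀ A : H →L[ℂ] H, FiniteDimensional ℂ (LinearMap.range (A : H →ₗ[ℂ] H)) →
        Module.rank ℂ (LinearMap.range (Phi A : H →ₗ[ℂ] H)) = Module.rank ℂ (LinearMap.range (A : H →ₗ[ℂ] H))) :=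
  stmt19_general V hViso L hL
end
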